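/- Let Q₈ be the subgroup of SU(2) generated by the matrices diag(i, -i) and [[0, 1], [-1, 0]], and let G be the subgroup of SU(2) generated by Q₈ together with the matrix A₀ = (1/2)·[[1+i, 1+i], [-1+i, 1-i]]. Then the commutator subgroup of G equals Q₈, i.e. [G, G] = Q₈. -/

import Mathlib

/-!
Write `D = diag(i, -i)` and `J = [[0,1],[-1,0]]`. Conjugation by `A₀` sends `D ↦ J` and
`J ↦ D J`, so `A₀` normalizes `Q₈ = ⟨D, J⟩`, and `D = ⁅A₀, J⁆`, `J = ⁅A₀, D⁆ D` lie in `[G, G]`.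
Conversely, as `A₀` normalizes `Q₈`, every element of `G = Q₈ ⊔ ⟨A₀⟩` is a product `k A₀ⁿ` with
`k ∈ Q₈`, and the commutator of two such products lies in `Q₈` because powers of `A₀` commute.
-/

open Matrix Complex

/-- The matrix `A₀ = (1/2)·[[1+i, 1+i], [-1+i, 1-i]]` from the homogeneous-space
description of the Gauss image of the isoparametric hypersurface with `g = 3`, `n = 3`. -/
noncomputable def A₀ : Matrix (Fin 2) (Fin 2) ℂ :=
  (2 : ℂ)⁻¹ • !![1 + I, 1 + I; -1 + I, 1 - I]

/-- The special unitary group `SU(2)`, realized as the subgroup of the unitary group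
`Matrix.unitaryGroup (Fin 2) ℂ` consisting of the matrices of determinant one. -/
def SU2 : Subgroup (Matrix.unitaryGroup (Fin 2) ℂ) where
  carrier := {A | Matrix.det (A : Matrix (Fin 2) (Fin 2) ℂ) = 1}
  one_mem' := by simp
  mul_mem' := by
    intro a b ha hb
    simp only [Set.mem_setOf_eq, Submonoid.coe_mul, Matrix.det_mul] at *
    rw [ha, hb, mul_one]
  inv_mem' := by
    intro a ha
    have h : ((a⁻¹ : Matrix.unitaryGroup (Fin 2) ℂ) : Matrix (Fin 2) (Fin 2) ℂ) *
        (a : Matrix (Fin 2) (Fin 2) ℂ) = 1 := by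
      have := congrArg (Subtype.val) (inv_mul_cancel a)
      simpa using this
    have hdet := congrArg Matrix.det h
    rw [Matrix.det_mul, Matrix.det_one] at hdet
    simp only [Set.mem_setOf_eq] at *
    rwa [ha, mul_one] at hdet

namespace Subgroup

open scoped commutatorElement

variable {G : Type*} [Group G]

theorem commutator_sup_le_of_le_normalizer {N H : Subgroup G} (hH : H ≤ normalizer N) :
    ⁅N ⊔ H, N ⊔ H⁆ ≤ N ⊔ ⁅H, H⁆ := by
  have hconj : ∀ {h}, h ∈ H → ∀ {k}, k ∈ N → h * k * h⁻¹ ∈ N :=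
    fun hh _ hk ↦ (mem_normalizer_iff.mp (hH hh) _).mp hk
  have hN : N ≤ N ⊔ ⁅H, H⁆ := le_sup_left
  have hH' : ⁅H, H⁆ ≤ N ⊔ ⁅H, H⁆ := le_sup_right
  rw [commutator_le]
  intro g₁ hg₁ g₂ hg₂
  rw [← SetLike.mem_coe, coe_mul_of_right_le_normalizer_left N H hH] at hg₁ hg₂
  obtain ⟨k₁, hk₁, h₁, hh₁, rfl⟩ := hg₁
  obtain ⟨k₂, hk₂, h₂, hh₂, rfl⟩ := hg₂
  have hfactor : ⁅k₁ * h₁, k₂ * h₂⁆ =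
      k₁ * (h₁ * k₂ * h₁⁻¹) * ⁅h₁, h₂⁆ * (h₂ * k₁⁻¹ * h₂⁻¹) * k₂⁻¹ := by
    simp only [commutatorElement_def]; group
  rw [hfactor]
  refine mul_mem (mul_mem (mul_mem (mul_mem ?_ ?_) ?_) ?_) ?_
  · exact hN hk₁
  · exact hN (hconj hh₁ hk₂)
  · exact hH' (commutator_mem_commutator hh₁ hh₂)
  · exact hN (hconj hh₂ (inv_mem hk₁))
  · exact hN (inv_mem hk₂)

theorem commutator_sup_zpowers_le {N : Subgroup G} {a : G} (ha : a ∈ normalizer N) :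
    ⁅N ⊔ zpowers a, N ⊔ zpowers a⁆ ≤ N := by
  have hcomm : ⁅zpowers a, zpowers a⁆ = ⊥ := commutator_self_eq_bot_iff.mpr inferInstance
  simpa [hcomm] using commutator_sup_le_of_le_normalizer (zpowers_le.mpr ha)

theorem closure_pair_mul_eq_closure_pair (d j : G) : closure {j, d * j} = closure {d, j} := by
  apply le_antisymm <;> rw [closure_le, Set.insert_subset_iff, Set.singleton_subset_iff]
  · exact ⟨subset_closure (by simp), mul_mem (subset_closure (by simp)) (subset_closure (by simp))⟩
  · have hj : j ∈ closure {j, d * j} := subset_closure (by simp)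
    have hdj : d * j ∈ closure {j, d * j} := subset_closure (by simp)
    exact ⟨by simpa using mul_mem hdj (inv_mem hj), hj⟩

variable {d j a : G}

theorem mem_normalizer_closure_pair (h₁ : a * d * a⁻¹ = j) (h₂ : a * j * a⁻¹ = d * j) :
    a ∈ normalizer (closure {d, j} : Set G) := by
  rw [mem_normalizer_iff_map_conj_eq, MonoidHom.map_closure, Set.image_pair]
  simp only [MonoidHom.coe_coe, MulAut.conj_apply, h₁, h₂, closure_pair_mul_eq_closure_pair]

theorem closure_pair_le_commutator {H : Subgroup G} (hd : d ∈ H) (hj : j ∈ H) (ha : a ∈ H)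
    (h₁ : a * d * a⁻¹ = j) (h₂ : a * j * a⁻¹ = d * j) : closure {d, j} ≤ ⁅H, H⁆ := by
  have hdC : d ∈ ⁅H, H⁆ := by
    have : ⁅a, j⁆ = d := by rw [commutatorElement_def, h₂]; group
    exact this ▸ commutator_mem_commutator ha hj
  have hjC : j ∈ ⁅H, H⁆ := by
    have : ⁅a, d⁆ * d = j := by rw [commutatorElement_def, h₁]; group
    exact this ▸ mul_mem (commutator_mem_commutator ha hd) hdC
  rw [closure_le, Set.insert_subset_iff, Set.singleton_subset_iff]
  exact ⟨hdC, hjC⟩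

theorem commutator_closure_triple_eq (h₁ : a * d * a⁻¹ = j) (h₂ : a * j * a⁻¹ = d * j) :
    ⁅closure {d, j, a}, closure {d, j, a}⁆ = closure {d, j} := by
  have hsplit : closure {d, j, a} = closure {d, j} ⊔ zpowers a := by
    rw [zpowers_eq_closure, ← closure_union, Set.insert_union, Set.singleton_union]
  apply le_antisymm
  · rw [hsplit]
    exact commutator_sup_zpowers_le (mem_normalizer_closure_pair h₁ h₂)
  · exact closure_pair_le_commutator (subset_closure (by simp)) (subset_closure (by simp))
      (subset_closure (by simp)) h₁ h₂

end Subgroup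

theorem A₀_mul_diag_I : A₀ * !![I, 0; 0, -I] = !![0, 1; -1, 0] * A₀ := by
  rw [A₀, Matrix.smul_mul, Matrix.mul_smul, mul_fin_two, mul_fin_two]
  congr 1
  ext i k; fin_cases i <;> fin_cases k <;> simp <;> ring_nf <;> simp only [I_sq] <;> ring

theorem A₀_mul_J : A₀ * !![0, 1; -1, 0] = !![I, 0; 0, -I] * !![0, 1; -1, 0] * A₀ := by
  rw [A₀, Matrix.smul_mul, Matrix.mul_smul, mul_fin_two, mul_fin_two, mul_fin_two]
  congr 1
  ext i k; fin_cases i <;> fin_cases k <;> simp <;> ring_nf <;> simp only [I_sq] <;> ring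

/-- Let `Q₈` be the subgroup of `SU(2)` generated by `diag(i, -i)` and `[[0,1],[-1,0]]`,
and let `G` be the subgroup of `SU(2)` generated by `Q₈` together with `A₀`.
Then the commutator subgroup of `G` equals `Q₈`. -/
theorem commutator_subgroup_eq_Q₈ (d j a : SU2)
    (hd : ((d : Matrix.unitaryGroup (Fin 2) ℂ) : Matrix (Fin 2) (Fin 2) ℂ) = !![I, 0; 0, -I])
    (hj : ((j : Matrix.unitaryGroup (Fin 2) ℂ) : Matrix (Fin 2) (Fin 2) ℂ) = !![0, 1; -1, 0])
    (ha : ((a : Matrix.unitaryGroup (Fin 2) ℂ) : Matrix (Fin 2) (Fin 2) ℂ) = A₀) :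
    ⁅(Subgroup.closure {d, j, a} : Subgroup SU2), (Subgroup.closure {d, j, a} : Subgroup SU2)⁆ =
      Subgroup.closure {d, j} := by
  have conj_d : a * d * a⁻¹ = j := by
    refine mul_inv_eq_of_eq_mul (Subtype.ext (Subtype.ext ?_))
    simp only [Subgroup.coe_mul, Submonoid.coe_mul, ha, hd, hj, A₀_mul_diag_I]
  have conj_j : a * j * a⁻¹ = d * j := by
    refine mul_inv_eq_of_eq_mul (Subtype.ext (Subtype.ext ?_))
    simp only [Subgroup.coe_mul, Submonoid.coe_mul, ha, hd, hj, A₀_mul_J]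
  exact Subgroup.commutator_closure_triple_eq conj_d conj_j
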